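/- For a₁ ∈ [0,1/2] and b₁ ∈ [3/2,2], the two-point distortion error with one point on each side equals 2(-6a₁²(b₁²-3b₁+3) + a₁(6b₁²-21b₁+20) + 3a₁⁴ + 3b₁⁴ - 24b₁³ + 66b₁² - 74b₁ + 27)/(3(a₁-b₁)), and its minimum value is 13/48, attained at a₁ = 1/8, b₁ = 15/8. -/

import Mathlib

/-!
Both integrals are elementary, which gives the closed form. Writing `s = a₁ + (2 - b₁)` for the
sum of the distances of the two points from the base vertices, the closed form rearranges to
`13/48 + (4s - 1)²/16 + (a₁ + b₁ - 2)² (3 + 2s - 4s²) / (2 (b₁ - a₁))`, and on the given ranges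
`s ∈ [0, 1]`, where `3 + 2s - 4s² > 0`; so the error is at least `13/48`, with equality exactly
when `s = 1/4` and `a₁ = 2 - b₁`.
-/

theorem integral_sq_sub_add_const (l u a c : ℝ) :
    ∫ x in l..u, ((x - a) ^ 2 + c) = ((u - a) ^ 3 - (l - a) ^ 3) / 3 + c * (u - l) := by
  have hsq : IntervalIntegrable (fun x : ℝ => (x - a) ^ 2) MeasureTheory.volume l u :=
    (by fun_prop : Continuous fun x : ℝ => (x - a) ^ 2).intervalIntegrable l u
  rw [intervalIntegral.integral_add hsq intervalIntegrable_const, intervalIntegral.integral_const,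
    intervalIntegral.integral_comp_sub_right (fun x => x ^ 2) a, integral_pow, smul_eq_mul]
  ring

/-- Abscissa where the Voronoi boundary of `(a, a√3)` and `(b, -√3 (b - 2))` meets the base. -/
noncomputable def voronoiBoundary (a b : ℝ) : ℝ := 2 * (a ^ 2 - b ^ 2 + 3 * b - 3) / (a - b)

noncomputable def distortion (a b : ℝ) : ℝ :=
  (1 / 2) * ((∫ x in (0 : ℝ)..voronoiBoundary a b, ((x - a) ^ 2 + 3 * a ^ 2)) +
    ∫ x in voronoiBoundary a b..(2 : ℝ), ((x - b) ^ 2 + 3 * (b - 2) ^ 2))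

theorem distortion_eq {a b : ℝ} (hab : a ≠ b) :
    distortion a b = 2 * (-6 * a ^ 2 * (b ^ 2 - 3 * b + 3) + a * (6 * b ^ 2 - 21 * b + 20)
      + 3 * a ^ 4 + 3 * b ^ 4 - 24 * b ^ 3 + 66 * b ^ 2 - 74 * b + 27) / (3 * (a - b)) := by
  have hab' : a - b ≠ 0 := sub_ne_zero.mpr hab
  rw [distortion, integral_sq_sub_add_const, integral_sq_sub_add_const, voronoiBoundary]
  field_simp
  ring

theorem distortion_eq_min_add {a b : ℝ} (hab : a ≠ b) :
    distortion a b = 13 / 48 + (4 * (a + 2 - b) - 1) ^ 2 / 16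
      + (a + b - 2) ^ 2 * (3 + 2 * (a + 2 - b) - 4 * (a + 2 - b) ^ 2) / (2 * (b - a)) := by
  have hab' : a - b ≠ 0 := sub_ne_zero.mpr hab
  have hba : b - a ≠ 0 := sub_ne_zero.mpr hab.symm
  rw [distortion_eq hab]
  field_simp
  ring

theorem thirteen_div_fortyEight_le_distortion {a b : ℝ} (ha₀ : 0 ≤ a) (ha₁ : a ≤ 1 / 2)
    (hb₀ : 3 / 2 ≤ b) (hb₁ : b ≤ 2) : 13 / 48 ≤ distortion a b := by
  have hab : a < b := by linarith
  have hs₀ : 0 ≤ a + 2 - b := by linarith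
  have hs₁ : a + 2 - b ≤ 1 := by linarith
  have hquad : 0 ≤ 3 + 2 * (a + 2 - b) - 4 * (a + 2 - b) ^ 2 := by nlinarith
  rw [distortion_eq_min_add hab.ne]
  have : 0 ≤ (a + b - 2) ^ 2 * (3 + 2 * (a + 2 - b) - 4 * (a + 2 - b) ^ 2) / (2 * (b - a)) :=
    div_nonneg (mul_nonneg (sq_nonneg _) hquad) (by linarith)
  have : 0 ≤ (4 * (a + 2 - b) - 1) ^ 2 / 16 := by positivity
  linarith

/-- Two-point distortion error with one point on each slanted side. -/
theorem stmt3 :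
    let V : ℝ → ℝ → ℝ := fun a₁ b₁ =>
      (1/2) * ((∫ x in (0:ℝ)..(2*(a₁^2 - b₁^2 + 3*b₁ - 3)/(a₁ - b₁)), ((x - a₁)^2 + 3*a₁^2)) +
        ∫ x in (2*(a₁^2 - b₁^2 + 3*b₁ - 3)/(a₁ - b₁))..(2:ℝ), ((x - b₁)^2 + 3*(b₁ - 2)^2))
    (∀ a₁ b₁ : ℝ, 0 ≤ a₁ → a₁ ≤ 1/2 → 3/2 ≤ b₁ → b₁ ≤ 2 →
      V a₁ b₁ = 2*(-6*a₁^2*(b₁^2 - 3*b₁ + 3) + a₁*(6*b₁^2 - 21*b₁ + 20) + 3*a₁^4 + 3*b₁^4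
        - 24*b₁^3 + 66*b₁^2 - 74*b₁ + 27)/(3*(a₁ - b₁))) ∧
    V (1/8) (15/8) = 13/48 ∧
    (∀ a₁ b₁ : ℝ, 0 ≤ a₁ → a₁ ≤ 1/2 → 3/2 ≤ b₁ → b₁ ≤ 2 → 13/48 ≤ V a₁ b₁) := by
  intro V
  refine ⟨fun a b _ ha₁ hb₀ _ => distortion_eq (by linarith), ?_,
    fun a b ha₀ ha₁ hb₀ hb₁ => thirteen_div_fortyEight_le_distortion ha₀ ha₁ hb₀ hb₁⟩
  change distortion (1 / 8) (15 / 8) = 13 / 48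
  rw [distortion_eq (by norm_num)]
  norm_num
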